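/- Let G be a finite simple connected graph that contains exactly one cycle, and suppose that cycle is a 3-cycle. If G contains neither I nor R as a minor, then there exists m ∈ ℕ such that G is isomorphic to a subgraph of W_m, the graph obtained from a 3-cycle by attaching to each of its three vertices a pendant path with m edges. (This is the combinatorial core of the forward direction of the paper's classification of projective planar products G □ C_3.) -/

import Mathlib

/-- `H` is a minor of `G`: there is an assignment of pairwise disjoint, connected,
nonempty branch sets in `G` to the vertices of `H`, with an edge of `G` between the
branch sets of any two adjacent vertices of `H`. -/
def SimpleGraph.IsMinorOf {W V : Type*} (H : SimpleGraph W) (G : SimpleGraph V) : Prop :=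
  ∃ φ : W → Set V,
    (∀ w, (G.induce (φ w)).Connected) ∧
    (Pairwise fun w w' => Disjoint (φ w) (φ w')) ∧
    ∀ ⦃w w'⦄, H.Adj w w' → ∃ a ∈ φ w, ∃ b ∈ φ w', G.Adj a b

/-- The graph `I`: the six-vertex double star obtained from an edge `uv` by attaching
two pendant vertices to `u` and two pendant vertices to `v`. -/
def GraphI : SimpleGraph (Fin 6) :=
  SimpleGraph.fromEdgeSet {s(0, 1), s(0, 2), s(0, 3), s(1, 4), s(1, 5)}

/-- The graph `R`: the five-vertex graph obtained from a 3-cycle on `{0,1,2}` by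
attaching two pendant vertices `3`, `4` to the vertex `0` of the cycle. -/
def GraphR : SimpleGraph (Fin 5) :=
  SimpleGraph.fromEdgeSet {s(0, 1), s(1, 2), s(0, 2), s(0, 3), s(0, 4)}

/-- The graph `W_m`: a 3-cycle with a pendant path with `m` edges attached to each of
its three vertices, the three attached paths being pairwise disjoint.  The vertex
`Sum.inl i` is the `i`-th cycle vertex, and `Sum.inr (i, j)` is the `(j+1)`-st vertex
along the path attached to the `i`-th cycle vertex. -/
def GraphW (m : ℕ) : SimpleGraph (Fin 3 ⊕ Fin 3 × Fin m) :=
  SimpleGraph.fromRel fun a b =>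
    match a, b with
    | Sum.inl i, Sum.inl j => i ≠ j
    | Sum.inl i, Sum.inr (i', j) => i = i' ∧ (j : ℕ) = 0
    | Sum.inr (i, j), Sum.inr (i', j') => i = i' ∧ (j : ℕ) + 1 = (j' : ℕ)
    | _, _ => False

/-- A subgraph of `G` is a cycle if its coercion is isomorphic to a cycle graph `C_n`
with `n ≥ 3`. -/
def SimpleGraph.Subgraph.IsCycleSubgraph {V : Type*} {G : SimpleGraph V}
    (H : G.Subgraph) : Prop :=
  ∃ n : ℕ, 3 ≤ n ∧ Nonempty (H.coe ≃g SimpleGraph.cycleGraph n)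

/-!
Let `abc` be the triangle. Deleting the edge `ab` leaves a spanning tree `T` (a cycle of `T`
would be a second cycle of `G`), which we root at `c`. If a vertex `v ≠ c` had two children
`x, y` in `T`, or `c` had two children besides `a` and `b`, then contracting the path of `T`
from `v` to the first triangle vertex on it would exhibit `R` as a minor of `G`. So `T` is a
spider: a vertex is determined by its depth and by the child of `c` it descends from. Laying the
branches through `a`, through `b` and through the remaining child of `c` along the three pendant
paths of `W_m` embeds `G`.
-/

open SimpleGraph

namespace SimpleGraph.IsTree

variable {V : Type*} {T : SimpleGraph V} (hT : T.IsTree) (r : V) {u v x z : V}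

noncomputable def rootPath (v : V) : T.Walk v r :=
  (hT.existsUnique_path v r).exists.choose

noncomputable def depth (v : V) : ℕ := (hT.rootPath r v).length

noncomputable def parent (v : V) : V := (hT.rootPath r v).snd

/-- The child of `r` whose subtree contains `v` (and `r` itself for `v = r`). -/
noncomputable def branch (v : V) : V := (hT.rootPath r v).penultimate

def children (v : V) : Set V := {x | x ≠ r ∧ hT.parent r x = v}

variable {r}

lemma isPath_rootPath (v : V) : (hT.rootPath r v).IsPath :=
  (hT.existsUnique_path v r).exists.choose_spec

lemma eq_rootPath {p : T.Walk v r} (hp : p.IsPath) : p = hT.rootPath r v :=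
  (hT.existsUnique_path v r).unique hp (hT.isPath_rootPath v)

@[simp] lemma rootPath_root : hT.rootPath r r = .nil :=
  (hT.eq_rootPath .nil).symm

@[simp] lemma depth_root : hT.depth r r = 0 := by simp [depth]

lemma depth_eq_zero_iff : hT.depth r v = 0 ↔ v = r :=
  ⟨Walk.eq_of_length_eq_zero, by rintro rfl; exact hT.depth_root⟩

@[simp] lemma branch_root : hT.branch r r = r := by simp [branch]

lemma not_nil_rootPath (hv : v ≠ r) : ¬ (hT.rootPath r v).Nil :=
  fun h => hv h.eq

lemma depth_lt_card [Fintype V] (v : V) : hT.depth r v < Fintype.card V :=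
  (hT.isPath_rootPath v).length_lt

lemma rootPath_of_adj (h : T.Adj u v) (hu : u ∉ (hT.rootPath r v).support) :
    hT.rootPath r u = .cons h (hT.rootPath r v) :=
  (hT.eq_rootPath ((hT.isPath_rootPath v).cons hu)).symm

lemma adj_parent (hv : v ≠ r) : T.Adj v (hT.parent r v) :=
  (hT.rootPath r v).adj_snd (hT.not_nil_rootPath hv)

lemma rootPath_eq_cons (hv : v ≠ r) :
    hT.rootPath r v = .cons (hT.adj_parent hv) (hT.rootPath r (hT.parent r v)) := by
  have h := (hT.rootPath r v).cons_tail_eq (hT.not_nil_rootPath hv)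
  rw [hT.eq_rootPath (hT.isPath_rootPath v).tail] at h
  exact h.symm

lemma depth_parent (hv : v ≠ r) : hT.depth r (hT.parent r v) + 1 = hT.depth r v := by
  rw [depth, depth, hT.rootPath_eq_cons hv, Walk.length_cons]

lemma depth_lt_of_mem_support (hz : z ∈ (hT.rootPath r v).support) (hzv : z ≠ v) :
    hT.depth r z < hT.depth r v := by
  classical
  rw [depth, depth, ← hT.eq_rootPath ((hT.isPath_rootPath v).dropUntil hz)]
  exact Walk.length_dropUntil_lt_length hz hzv

lemma parent_eq_of_adj_of_notMem (h : T.Adj u v) (hu : u ∉ (hT.rootPath r v).support) :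
    u ≠ r ∧ hT.parent r u = v := by
  have hcons := hT.rootPath_of_adj h hu
  refine ⟨fun hur => ?_, by rw [parent, hcons, Walk.snd_cons]⟩
  subst hur
  simp at hcons

lemma parent_eq_or_parent_eq_of_adj (h : T.Adj u v) :
    (u ≠ r ∧ hT.parent r u = v) ∨ (v ≠ r ∧ hT.parent r v = u) := by
  by_cases hu : u ∈ (hT.rootPath r v).support
  · have hv : v ∉ (hT.rootPath r u).support := fun hv =>
      (hT.depth_lt_of_mem_support hu h.ne).not_gt (hT.depth_lt_of_mem_support hv h.ne')
    exact .inr (hT.parent_eq_of_adj_of_notMem h.symm hv)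
  · exact .inl (hT.parent_eq_of_adj_of_notMem h hu)

lemma parent_eq_root_of_adj (h : T.Adj v r) : hT.parent r v = r := by
  rcases hT.parent_eq_or_parent_eq_of_adj h with h' | h'
  · exact h'.2
  · exact absurd rfl h'.1

lemma depth_eq_one_of_adj_root (h : T.Adj v r) : hT.depth r v = 1 := by
  have := hT.depth_parent h.ne
  rw [hT.parent_eq_root_of_adj h, depth_root] at this
  omega

lemma notMem_support_of_mem_children (hx : x ∈ hT.children r v) :
    x ∉ (hT.rootPath r v).support := fun hmem => by
  have hxv : x ≠ v := hx.2 ▸ (hT.adj_parent hx.1).ne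
  have := hT.depth_lt_of_mem_support hmem hxv
  have := hT.depth_parent hx.1
  rw [hx.2] at this
  omega

lemma branch_mem_children (hv : v ≠ r) : hT.branch r v ∈ hT.children r r := by
  have h := (hT.rootPath r v).adj_penultimate (hT.not_nil_rootPath hv)
  rcases hT.parent_eq_or_parent_eq_of_adj h with h' | h'
  · exact h'
  · exact absurd rfl h'.1

lemma branch_eq_self (hv : v ≠ r) (hp : hT.parent r v = r) : hT.branch r v = v := by
  rw [branch, Walk.penultimate, ← depth, ← hT.depth_parent hv, hp, depth_root]
  exact Walk.getVert_zero _

lemma branch_parent (hv : v ≠ r) (hp : hT.parent r v ≠ r) :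
    hT.branch r (hT.parent r v) = hT.branch r v := by
  rw [branch, branch, hT.rootPath_eq_cons hv, Walk.penultimate_cons_of_not_nil _ _
    (hT.not_nil_rootPath hp)]

lemma eq_of_depth_eq_of_branch_eq (hchild : ∀ v, v ≠ r → (hT.children r v).Subsingleton)
    (hd : hT.depth r u = hT.depth r v) (hb : hT.branch r u = hT.branch r v) : u = v := by
  induction hn : hT.depth r u generalizing u v with
  | zero =>
    rw [hn, eq_comm, hT.depth_eq_zero_iff] at hd
    rw [hT.depth_eq_zero_iff.mp hn, hd]
  | succ n ih =>
    have hu : u ≠ r := by rintro rfl; simp at hn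
    have hv : v ≠ r := by rintro rfl; simp [hn] at hd
    have hdu := hT.depth_parent hu
    have hdv := hT.depth_parent hv
    by_cases hpu : hT.parent r u = r
    · rw [hpu, depth_root] at hdu
      have hpv : hT.parent r v = r := hT.depth_eq_zero_iff.mp (by omega)
      rwa [hT.branch_eq_self hu hpu, hT.branch_eq_self hv hpv] at hb
    · have hpv : hT.parent r v ≠ r := fun hpv => hpu <| hT.depth_eq_zero_iff.mp <| by
        rw [hpv, depth_root] at hdv; omega
      have hpp : hT.parent r u = hT.parent r v :=
        ih (by omega) (by rw [hT.branch_parent hu hpu, hT.branch_parent hv hpv, hb]) (by omega)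
      exact hchild _ hpu ⟨hu, rfl⟩ ⟨hv, hpp.symm⟩

end SimpleGraph.IsTree

section

variable {V : Type*}

lemma SimpleGraph.Walk.exists_walk_to_first_mem {G : SimpleGraph V} {S : Set V} {u v : V}
    (p : G.Walk u v) (hv : v ∈ S) :
    ∃ w ∈ S, ∃ q : G.Walk u w, q.support ⊆ p.support ∧ ∀ z ∈ q.support, z ∈ S → z = w := by
  induction p with
  | nil => exact ⟨_, hv, .nil, by simp, by simp⟩
  | @cons u _ _ h p ih =>
    by_cases hu : u ∈ S
    · exact ⟨u, hu, .nil, by simp, by simp⟩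
    · obtain ⟨w, hw, q, hsub, hfirst⟩ := ih hv
      refine ⟨w, hw, .cons h q, ?_, ?_⟩
      · simpa using List.cons_subset_cons _ hsub
      · rintro z hz hzS
        rcases List.mem_cons.mp hz with rfl | hz
        · exact absurd hzS hu
        · exact hfirst z hz hzS

lemma SimpleGraph.induce_singleton_connected (G : SimpleGraph V) (x : V) :
    (G.induce {x}).Connected :=
  { preconnected := Preconnected.of_subsingleton, nonempty := ⟨⟨x, rfl⟩⟩ }

theorem graphR_isMinorOf_of_walk {G : SimpleGraph V} {v t₀ t₁ t₂ x y : V} (Q : G.Walk v t₀)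
    (h₀₁ : G.Adj t₀ t₁) (h₀₂ : G.Adj t₀ t₂) (h₁₂ : G.Adj t₁ t₂) (hx : G.Adj v x)
    (hy : G.Adj v y) (hnodup : [t₁, t₂, x, y].Nodup) (hQ : ∀ z ∈ [t₁, t₂, x, y], z ∉ Q.support) :
    GraphR.IsMinorOf G := by
  simp only [List.nodup_cons, List.mem_cons, List.not_mem_nil, or_false, not_or,
    List.nodup_nil, and_true] at hnodup
  simp only [List.mem_cons, List.not_mem_nil, or_false, forall_eq_or_imp, forall_eq] at hQ
  refine ⟨![{z | z ∈ Q.support}, {t₁}, {t₂}, {x}, {y}], fun w => ?_, fun i j hij => ?_,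
    fun w w' h => ?_⟩
  · fin_cases w
    · exact Q.connected_induce_support
    all_goals exact G.induce_singleton_connected _
  · fin_cases i <;> fin_cases j <;> simp_all [eq_comm]
  · fin_cases w <;> fin_cases w' <;>
      simp only [GraphR, fromEdgeSet_adj, Set.mem_insert_iff, Set.mem_singleton_iff,
        Sym2.eq_iff] at h <;> simp at h ⊢
    all_goals first
      | assumption
      | exact h₁₂.symm
      | exact ⟨t₀, Q.end_mem_support, by assumption⟩
      | exact ⟨t₀, Q.end_mem_support, G.adj_symm (by assumption)⟩
      | exact ⟨v, Q.start_mem_support, by assumption⟩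
      | exact ⟨v, Q.start_mem_support, G.adj_symm (by assumption)⟩

lemma exists_triangle_of_iso_cycleGraph_three {G : SimpleGraph V} {C : G.Subgraph}
    (e : C.coe ≃g cycleGraph 3) : ∃ a b c, C.Adj a b ∧ C.Adj a c ∧ C.Adj b c := by
  have key : ∀ i j : Fin 3, i ≠ j → C.Adj (e.symm i) (e.symm j) := fun i j hij =>
    e.symm.map_adj_iff.mpr (by rwa [cycleGraph_three_eq_top])
  exact ⟨_, _, _, key 0 1 (by decide), key 0 2 (by decide), key 1 2 (by decide)⟩

theorem isAcyclic_of_forall_isCycleSubgraph_eq {G T : SimpleGraph V} (hTG : T ≤ G)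
    {C : G.Subgraph} (huniq : ∀ D : G.Subgraph, D.IsCycleSubgraph → D = C) {a b : V}
    (hab : C.Adj a b) (hT : ¬ T.Adj a b) : T.IsAcyclic := by
  intro v p hp
  obtain ⟨f⟩ := (cycleGraph_isContained_iff hp.three_le_length).mpr ⟨v, p, hp, rfl⟩
  let F := (Copy.ofLE T G hTG).comp f
  have hF : F.toSubgraph.IsCycleSubgraph := ⟨_, hp.three_le_length, ⟨F.isoToSubgraph.symm⟩⟩
  rw [← huniq _ hF] at hab
  obtain ⟨i, j, hij, rfl, rfl⟩ := hab
  exact hT (f.toHom.map_adj hij)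

theorem isTree_deleteEdges_of_forall_isCycleSubgraph_eq {G : SimpleGraph V} (hconn : G.Connected)
    {C : G.Subgraph} (huniq : ∀ D : G.Subgraph, D.IsCycleSubgraph → D = C) {a b c : V}
    (hab : C.Adj a b) (hac : (G.deleteEdges {s(a, b)}).Adj a c)
    (hbc : (G.deleteEdges {s(a, b)}).Adj b c) : (G.deleteEdges {s(a, b)}).IsTree :=
  ⟨hconn.connected_delete_edge_of_not_isBridge
      (by rw [isBridge_iff, not_not]; exact hac.reachable.trans hbc.reachable.symm),
    isAcyclic_of_forall_isCycleSubgraph_eq (G.deleteEdges_le _) huniq hab (by simp)⟩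

section

variable {G T : SimpleGraph V} (hT : T.IsTree) (hTG : T ≤ G) {a b c : V}
  (hab : G.Adj a b) (hac : G.Adj a c) (hbc : G.Adj b c)
include hT hTG hab hac hbc

theorem graphR_isMinorOf_of_two_children {v x y : V} (hx : x ∈ hT.children c v)
    (hy : y ∈ hT.children c v) (hxy : x ≠ y) (hxab : x ≠ a ∧ x ≠ b) (hyab : y ≠ a ∧ y ≠ b) :
    GraphR.IsMinorOf G := by
  obtain ⟨w, hw, Q, hQsub, hQfirst⟩ :=
    ((hT.rootPath c v).mapLe hTG).exists_walk_to_first_mem (S := {a, b, c}) (by simp)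
  rw [Walk.support_mapLe_eq_support] at hQsub
  have hxQ : x ∉ Q.support := fun h => hT.notMem_support_of_mem_children hx (hQsub h)
  have hyQ : y ∉ Q.support := fun h => hT.notMem_support_of_mem_children hy (hQsub h)
  have hvx : G.Adj v x := hTG (hx.2 ▸ hT.adj_parent hx.1).symm
  have hvy : G.Adj v y := hTG (hy.2 ▸ hT.adj_parent hy.1).symm
  have hfirst : ∀ z ∈ ({a, b, c} : Set V), z ≠ w → z ∉ Q.support :=
    fun z hz hzw hzQ => hzw (hQfirst z hzQ hz)
  have hxc : x ≠ c := hx.1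
  have hyc : y ≠ c := hy.1
  have hne : a ≠ b ∧ a ≠ c ∧ b ≠ c := ⟨hab.ne, hac.ne, hbc.ne⟩
  rcases hw with rfl | rfl | rfl <;>
    [refine graphR_isMinorOf_of_walk Q hab hac hbc hvx hvy ?_ ?_;
     refine graphR_isMinorOf_of_walk Q hab.symm hbc hac hvx hvy ?_ ?_;
     refine graphR_isMinorOf_of_walk Q hac.symm hbc.symm hab hvx hvy ?_ ?_] <;>
    simp [*, Ne.symm]

theorem children_subsingleton_of_not_isMinorOf (hR : ¬ GraphR.IsMinorOf G)
    (hTac : T.Adj a c) (hTbc : T.Adj b c) {v : V} (hv : v ≠ c) :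
    (hT.children c v).Subsingleton := by
  have hnot_ab : ∀ x ∈ hT.children c v, x ≠ a ∧ x ≠ b := by
    rintro x hx
    constructor <;> rintro rfl
    · exact hv (hx.2.symm.trans (hT.parent_eq_root_of_adj hTac))
    · exact hv (hx.2.symm.trans (hT.parent_eq_root_of_adj hTbc))
  intro x hx y hy
  by_contra hxy
  exact hR (graphR_isMinorOf_of_two_children hT hTG hab hac hbc hx hy hxy
    (hnot_ab x hx) (hnot_ab y hy))

theorem children_root_diff_subsingleton_of_not_isMinorOf (hR : ¬ GraphR.IsMinorOf G) :
    (hT.children c c \ {a, b}).Subsingleton := by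
  rintro x ⟨hx, hxab⟩ y ⟨hy, hyab⟩
  by_contra hxy
  simp only [Set.mem_insert_iff, Set.mem_singleton_iff, not_or] at hxab hyab
  exact hR (graphR_isMinorOf_of_two_children hT hTG hab hac hbc hx hy hxy hxab hyab)

end

end

namespace GraphW

variable {m : ℕ}

/-- The vertex at distance `h` from the cycle on the pendant path at the `i`-th cycle vertex. -/
def pathVertex (m : ℕ) (i : Fin 3) (h : Fin (m + 1)) : Fin 3 ⊕ Fin 3 × Fin m :=
  Fin.cases (.inl i) (fun j => .inr (i, j)) h

@[simp] lemma pathVertex_zero (i : Fin 3) : pathVertex m i 0 = .inl i := rfl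

lemma adj_inl {i j : Fin 3} (h : i ≠ j) : (GraphW m).Adj (.inl i) (.inl j) :=
  (SimpleGraph.fromRel_adj _ _ _).mpr ⟨by simpa using h, .inl h⟩

lemma adj_pathVertex {i : Fin 3} {h h' : Fin (m + 1)} (hh : (h : ℕ) + 1 = h') :
    (GraphW m).Adj (pathVertex m i h) (pathVertex m i h') := by
  obtain ⟨j', rfl⟩ := Fin.exists_succ_eq.mpr (Fin.pos_iff_ne_zero.mp (by omega : 0 < (h' : ℕ)))
  rw [GraphW, SimpleGraph.fromRel_adj]
  induction h using Fin.cases with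
  | zero => simp_all [pathVertex]
  | succ j => simp_all [pathVertex]; omega

lemma pathVertex_inj {i i' : Fin 3} {h h' : Fin (m + 1)} :
    pathVertex m i h = pathVertex m i' h' ↔ i = i' ∧ h = h' := by
  induction h using Fin.cases <;> induction h' using Fin.cases <;>
    simp [pathVertex, Fin.succ_ne_zero, (Fin.succ_ne_zero _).symm]

end GraphW

namespace SimpleGraph.IsTree

variable {V : Type*} [Fintype V] [DecidableEq V] {T : SimpleGraph V} (hT : T.IsTree) (a b c : V)

/-- The branches of `c` through `a` and through `b` go to the pendant paths at `a ↦ inl 0` and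
`b ↦ inl 1`, and the remaining branch to the pendant path at `c ↦ inl 2`, hence the shifted
depths. -/
noncomputable def toGraphW (v : V) : Fin 3 ⊕ Fin 3 × Fin (Fintype.card V) :=
  if hT.branch c v = a then
    GraphW.pathVertex _ 0 ⟨hT.depth c v - 1, by have := hT.depth_lt_card (r := c) v; omega⟩
  else if hT.branch c v = b then
    GraphW.pathVertex _ 1 ⟨hT.depth c v - 1, by have := hT.depth_lt_card (r := c) v; omega⟩
  else
    GraphW.pathVertex _ 2 ⟨hT.depth c v, by have := hT.depth_lt_card (r := c) v; omega⟩

variable {a b c}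

lemma toGraphW_root (hac : a ≠ c) (hbc : b ≠ c) : hT.toGraphW a b c c = .inl 2 := by
  simp [toGraphW, hac.symm, hbc.symm]

lemma toGraphW_left (hTac : T.Adj a c) : hT.toGraphW a b c a = .inl 0 := by
  simp [toGraphW, hT.branch_eq_self hTac.ne (hT.parent_eq_root_of_adj hTac),
    hT.depth_eq_one_of_adj_root hTac]

lemma toGraphW_right (hab : a ≠ b) (hTbc : T.Adj b c) : hT.toGraphW a b c b = .inl 1 := by
  simp [toGraphW, hT.branch_eq_self hTbc.ne (hT.parent_eq_root_of_adj hTbc),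
    hT.depth_eq_one_of_adj_root hTbc, hab.symm]

lemma adj_toGraphW_parent (hab : a ≠ b) (hTac : T.Adj a c) (hTbc : T.Adj b c) {v : V}
    (hv : v ≠ c) :
    (GraphW _).Adj (hT.toGraphW a b c v) (hT.toGraphW a b c (hT.parent c v)) := by
  have hdepth := hT.depth_parent hv
  by_cases hp : hT.parent c v = c
  · rw [hp, hT.toGraphW_root hTac.ne hTbc.ne]
    by_cases hva : v = a
    · rw [hva, hT.toGraphW_left hTac]; exact GraphW.adj_inl (by decide)
    by_cases hvb : v = b
    · rw [hvb, hT.toGraphW_right hab hTbc]; exact GraphW.adj_inl (by decide)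
    rw [hp, depth_root] at hdepth
    simp only [toGraphW, hT.branch_eq_self hv hp, hva, hvb, if_false]
    exact (GraphW.adj_pathVertex (i := 2) (h := 0) (by simp [hdepth])).symm
  · have : hT.depth c (hT.parent c v) ≠ 0 := hT.depth_eq_zero_iff.not.mpr hp
    simp only [toGraphW, hT.branch_parent hv hp]
    split_ifs <;> exact (GraphW.adj_pathVertex (by simp; omega)).symm

lemma adj_toGraphW_of_adj (hab : a ≠ b) (hTac : T.Adj a c) (hTbc : T.Adj b c) {x y : V}
    (h : T.Adj x y) : (GraphW _).Adj (hT.toGraphW a b c x) (hT.toGraphW a b c y) := by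
  rcases hT.parent_eq_or_parent_eq_of_adj (r := c) h with ⟨hx, rfl⟩ | ⟨hy, rfl⟩
  · exact hT.adj_toGraphW_parent hab hTac hTbc hx
  · exact (hT.adj_toGraphW_parent hab hTac hTbc hy).symm

lemma toGraphW_injective (hac : a ≠ c) (hbc : b ≠ c)
    (hchild : ∀ v, v ≠ c → (hT.children c v).Subsingleton)
    (hroot : (hT.children c c \ {a, b}).Subsingleton) :
    Function.Injective (hT.toGraphW a b c) := by
  have hdepth : ∀ w, hT.branch c w = a ∨ hT.branch c w = b → hT.depth c w ≠ 0 := by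
    rintro w hw hw0
    rw [hT.depth_eq_zero_iff.mp hw0, branch_root] at hw
    exact hw.elim hac.symm hbc.symm
  intro u v huv
  suffices h : hT.depth c u = hT.depth c v ∧ hT.branch c u = hT.branch c v from
    hT.eq_of_depth_eq_of_branch_eq hchild h.1 h.2
  simp only [toGraphW] at huv
  split_ifs at huv with hu hv hv' hu' hw hw' hx hx' <;>
    simp only [GraphW.pathVertex_inj, Fin.mk.injEq, Fin.reduceEq, false_and, true_and] at huv
  · have := hdepth u (.inl hu); have := hdepth v (.inl hv)
    exact ⟨by omega, hu.trans hv.symm⟩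
  · have := hdepth u (.inr hu'); have := hdepth v (.inr hw')
    exact ⟨by omega, hu'.trans hw'.symm⟩
  · refine ⟨huv, ?_⟩
    by_cases huc : u = c
    · rw [huc, depth_root, eq_comm, hT.depth_eq_zero_iff] at huv
      rw [huc, huv]
    have hvc : v ≠ c := fun hvc =>
      huc (hT.depth_eq_zero_iff.mp (huv.trans (hT.depth_eq_zero_iff.mpr hvc)))
    exact hroot ⟨hT.branch_mem_children huc, by simp [hu, hu']⟩
      ⟨hT.branch_mem_children hvc, by simp [hx, hx']⟩

lemma adj_toGraphW_left_right (hab : a ≠ b) (hTac : T.Adj a c) (hTbc : T.Adj b c) :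
    (GraphW _).Adj (hT.toGraphW a b c a) (hT.toGraphW a b c b) := by
  rw [hT.toGraphW_left hTac, hT.toGraphW_right hab hTbc]
  exact GraphW.adj_inl (by decide)

end SimpleGraph.IsTree

theorem unicyclic_subgraph_of_W_general {V : Type*} [Fintype V] (G : SimpleGraph V)
    (hconn : G.Connected) (C : G.Subgraph)
    (hC : Nonempty (C.coe ≃g SimpleGraph.cycleGraph 3))
    (huniq : ∀ D : G.Subgraph, D.IsCycleSubgraph → D = C)
    (hR : ¬ GraphR.IsMinorOf G) :
    ∃ (m : ℕ) (f : V → Fin 3 ⊕ Fin 3 × Fin m),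
      Function.Injective f ∧ ∀ a b, G.Adj a b → (GraphW m).Adj (f a) (f b) := by
  classical
  obtain ⟨a, b, c, hCab, hCac, hCbc⟩ := exists_triangle_of_iso_cycleGraph_three hC.some
  have hab := C.adj_sub hCab
  have hac := C.adj_sub hCac
  have hbc := C.adj_sub hCbc
  set T := G.deleteEdges {s(a, b)}
  have hTG : T ≤ G := G.deleteEdges_le _
  have hTadj : ∀ {x y}, G.Adj x y → s(x, y) ≠ s(a, b) → T.Adj x y := fun h hne => by
    simp [T, h, hne]
  have hTac : T.Adj a c := hTadj hac (by simp [hbc.ne', hac.ne'])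
  have hTbc : T.Adj b c := hTadj hbc (by simp [hac.ne', hbc.ne'])
  have hT : T.IsTree := isTree_deleteEdges_of_forall_isCycleSubgraph_eq hconn huniq hCab hTac hTbc
  refine ⟨_, hT.toGraphW a b c, hT.toGraphW_injective hTac.ne hTbc.ne
    (fun v hv => children_subsingleton_of_not_isMinorOf hT hTG hab hac hbc hR hTac hTbc hv)
    (children_root_diff_subsingleton_of_not_isMinorOf hT hTG hab hac hbc hR), fun x y hxy => ?_⟩
  by_cases he : s(x, y) = s(a, b)
  · rcases Sym2.eq_iff.mp he with ⟨rfl, rfl⟩ | ⟨rfl, rfl⟩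
    · exact hT.adj_toGraphW_left_right hab.ne hTac hTbc
    · exact (hT.adj_toGraphW_left_right hxy.ne' hTac hTbc).symm
  · exact hT.adj_toGraphW_of_adj hab.ne hTac hTbc (hTadj hxy he)

/-- If a finite simple connected graph `G` contains exactly one cycle, that cycle is a
3-cycle, and `G` has neither an `I` minor nor an `R` minor, then `G` is isomorphic to
a subgraph of `W_m` for some `m ∈ ℕ`. -/
theorem unicyclic_subgraph_of_W {V : Type*} [Fintype V] (G : SimpleGraph V)
    (hconn : G.Connected) (C : G.Subgraph)
    (hC : Nonempty (C.coe ≃g SimpleGraph.cycleGraph 3))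
    (huniq : ∀ D : G.Subgraph, D.IsCycleSubgraph → D = C)
    (hI : ¬ GraphI.IsMinorOf G) (hR : ¬ GraphR.IsMinorOf G) :
    ∃ (m : ℕ) (f : V → Fin 3 ⊕ Fin 3 × Fin m),
      Function.Injective f ∧ ∀ a b, G.Adj a b → (GraphW m).Adj (f a) (f b) :=
  unicyclic_subgraph_of_W_general G hconn C hC huniq hR
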